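/- arXiv:2209.10154 — 5 statements merged into one kernel-verified Lean document; each statement's English description precedes it below -/
import Mathlib

section
/- Let p > -1, δ > 0 and μ > 0. Then there exist constants C₁ > 0, C₂ > 0 and t₀ > 0 such that for all t ≥ t₀: C₁ t^{-(p+1)} ≤ ∫₀^δ (1+r)^{-μt} r^p dr ≤ C₂ t^{-(p+1)}. -/
/-!
Write `s = μ t`. Near `r = 0` the weight `(1 + r) ^ (-s)` behaves like `exp (-s r)`: it is at least
`exp (-s r)` (from `1 + r ≤ exp r`), and on `(0, δ)` at most `exp (-s r / (1 + δ))`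
(from `log (1 + r) ≥ r / (1 + r)`). For the lower bound, restrict to `(0, 1/s)`, where the weight is
at least `exp (-1)`, and integrate `r ^ p`; for the upper bound, extend the exponential bound to
`(0, ∞)`, where it integrates to a Gamma function. Both sides are constant multiples of
`s ^ (-(p + 1))`.
-/

open MeasureTheory Real Set

lemma integrableOn_Ioo_rpow {p : ℝ} (hp : -1 < p) (b : ℝ) :
    IntegrableOn (fun r : ℝ => r ^ p) (Ioo 0 b) :=
  (intervalIntegral.intervalIntegrable_rpow' hp).1.mono_set Ioo_subset_Ioc_self

lemma integral_Ioo_rpow {p b : ℝ} (hp : -1 < p) (hb : 0 ≤ b) :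
    ∫ r in Ioo 0 b, r ^ p = b ^ (p + 1) / (p + 1) := by
  rw [← integral_Ioc_eq_integral_Ioo, ← intervalIntegral.integral_of_le hb,
    integral_rpow (Or.inl hp), zero_rpow (by linarith), sub_zero]

lemma exp_neg_mul_le_one_add_rpow_neg {r s : ℝ} (hr : 0 < 1 + r) (hs : 0 ≤ s) :
    exp (-(s * r)) ≤ (1 + r) ^ (-s) := by
  rw [rpow_def_of_pos hr, exp_le_exp]
  nlinarith [log_le_sub_one_of_pos hr]

lemma one_add_rpow_neg_le_exp_neg_mul {r s δ : ℝ} (hr : 0 ≤ r) (hrδ : r ≤ δ) (hs : 0 ≤ s) :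
    (1 + r) ^ (-s) ≤ exp (-(s / (1 + δ) * r)) := by
  have hr1 : 0 < 1 + r := by linarith
  have hlog : r / (1 + δ) ≤ log (1 + r) :=
    calc r / (1 + δ) ≤ r / (1 + r) := div_le_div_of_nonneg_left hr hr1 (by linarith)
      _ = 1 - (1 + r)⁻¹ := by field_simp; ring
      _ ≤ log (1 + r) := one_sub_inv_le_log_of_pos hr1
  rw [rpow_def_of_pos hr1, exp_le_exp, div_mul_eq_mul_div, mul_div_assoc]
  nlinarith

lemma integrableOn_one_add_rpow_neg_mul_rpow {p s : ℝ} (hp : -1 < p) (hs : 0 ≤ s) (b : ℝ) :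
    IntegrableOn (fun r : ℝ => (1 + r) ^ (-s) * r ^ p) (Ioo 0 b) := by
  refine (integrableOn_Ioo_rpow hp b).mono' (by fun_prop) ?_
  filter_upwards [ae_restrict_mem measurableSet_Ioo] with r hr
  have hr0 : 0 < r := hr.1
  rw [norm_of_nonneg (by positivity)]
  exact mul_le_of_le_one_left (by positivity)
    (rpow_le_one_of_one_le_of_nonpos (by linarith) (by linarith))

lemma le_integral_one_add_rpow_neg_mul_rpow {p s δ : ℝ} (hp : -1 < p) (hs : 0 < s)
    (hsδ : s⁻¹ ≤ δ) :
    exp (-1) * s ^ (-(p + 1)) / (p + 1) ≤ ∫ r in Ioo 0 δ, (1 + r) ^ (-s) * r ^ p := by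
  have hf := integrableOn_one_add_rpow_neg_mul_rpow hp hs.le δ
  have hsub : Ioo 0 s⁻¹ ⊆ Ioo 0 δ := Ioo_subset_Ioo_right hsδ
  calc exp (-1) * s ^ (-(p + 1)) / (p + 1) = ∫ r in Ioo 0 s⁻¹, exp (-1) * r ^ p := by
        rw [integral_const_mul, integral_Ioo_rpow hp (by positivity), inv_rpow hs.le,
          ← rpow_neg hs.le]
        ring
    _ ≤ ∫ r in Ioo 0 s⁻¹, (1 + r) ^ (-s) * r ^ p := by
        refine setIntegral_mono_on ((integrableOn_Ioo_rpow hp _).const_mul _) (hf.mono_set hsub)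
          measurableSet_Ioo fun r ⟨hr, hrs⟩ => ?_
        have hsr : s * r ≤ 1 := by
          simpa [hs.ne'] using mul_le_mul_of_nonneg_left hrs.le hs.le
        gcongr
        calc exp (-1) ≤ exp (-(s * r)) := exp_le_exp.2 (by linarith)
          _ ≤ (1 + r) ^ (-s) := exp_neg_mul_le_one_add_rpow_neg (by linarith) hs.le
    _ ≤ ∫ r in Ioo 0 δ, (1 + r) ^ (-s) * r ^ p := by
        refine setIntegral_mono_set hf ?_ hsub.eventuallyLE
        filter_upwards [ae_restrict_mem measurableSet_Ioo] with r hr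
        have hr0 : 0 < r := hr.1
        positivity

lemma integral_one_add_rpow_neg_mul_rpow_le {p s δ : ℝ} (hp : -1 < p) (hs : 0 < s) (hδ : 0 ≤ δ) :
    ∫ r in Ioo 0 δ, (1 + r) ^ (-s) * r ^ p ≤ Gamma (p + 1) * (s / (1 + δ)) ^ (-(p + 1)) := by
  set c := s / (1 + δ)
  have hc : 0 < c := by positivity
  have hgamma : ∫ r in Ioi 0, r ^ p * exp (-(c * r)) = Gamma (p + 1) * c ^ (-(p + 1)) := by
    have := integral_rpow_mul_exp_neg_mul_Ioi (a := p + 1) (by linarith) hc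
    rw [add_sub_cancel_right] at this
    rw [this, one_div, inv_rpow hc.le, ← rpow_neg hc.le, mul_comm]
  have hg : IntegrableOn (fun r => r ^ p * exp (-(c * r))) (Ioi 0) := by
    refine Integrable.of_integral_ne_zero ?_
    rw [hgamma]
    exact (mul_pos (Gamma_pos_of_pos (by linarith)) (rpow_pos_of_pos hc _)).ne'
  calc ∫ r in Ioo 0 δ, (1 + r) ^ (-s) * r ^ p ≤ ∫ r in Ioo 0 δ, r ^ p * exp (-(c * r)) := by
        refine setIntegral_mono_on (integrableOn_one_add_rpow_neg_mul_rpow hp hs.le δ)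
          (hg.mono_set Ioo_subset_Ioi_self) measurableSet_Ioo fun r ⟨hr, hrδ⟩ => ?_
        rw [mul_comm]
        gcongr
        exact one_add_rpow_neg_le_exp_neg_mul hr.le hrδ.le hs.le
    _ ≤ ∫ r in Ioi 0, r ^ p * exp (-(c * r)) := by
        refine setIntegral_mono_set hg ?_ Ioo_subset_Ioi_self.eventuallyLE
        filter_upwards [ae_restrict_mem measurableSet_Ioi] with r (hr : 0 < r)
        positivity
    _ = Gamma (p + 1) * c ^ (-(p + 1)) := hgamma

/-- Lemma 2.1: for `p > -1`, `δ > 0`, `μ > 0`,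
`∫₀^δ (1+r)^{-μt} r^p dr ∼ t^{-(p+1)}` as `t → ∞`. -/
theorem stmt0 (p δ μ : ℝ) (hp : -1 < p) (hδ : 0 < δ) (hμ : 0 < μ) :
    ∃ C₁ C₂ t₀ : ℝ, 0 < C₁ ∧ 0 < C₂ ∧ 0 < t₀ ∧ ∀ t : ℝ, t₀ ≤ t →
      C₁ * t ^ (-(p + 1)) ≤ (∫ r in Set.Ioo (0:ℝ) δ, (1 + r) ^ (-(μ * t)) * r ^ p) ∧
      (∫ r in Set.Ioo (0:ℝ) δ, (1 + r) ^ (-(μ * t)) * r ^ p) ≤ C₂ * t ^ (-(p + 1)) := by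
  have hp1 : 0 < p + 1 := by linarith
  refine ⟨exp (-1) * μ ^ (-(p + 1)) / (p + 1), Gamma (p + 1) * (μ / (1 + δ)) ^ (-(p + 1)),
    (μ * δ)⁻¹, by positivity, by positivity, by positivity, fun t ht => ?_⟩
  have ht0 : 0 < t := lt_of_lt_of_le (by positivity) ht
  have hμt : 0 < μ * t := by positivity
  have hμtδ : (μ * t)⁻¹ ≤ δ := by
    rw [inv_le_iff_one_le_mul₀ (by positivity)] at ht
    rw [inv_le_iff_one_le_mul₀ hμt]
    linarith
  constructor
  · calc exp (-1) * μ ^ (-(p + 1)) / (p + 1) * t ^ (-(p + 1))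
        = exp (-1) * (μ * t) ^ (-(p + 1)) / (p + 1) := by rw [mul_rpow hμ.le ht0.le]; ring
      _ ≤ _ := le_integral_one_add_rpow_neg_mul_rpow hp hμt hμtδ
  · calc _ ≤ Gamma (p + 1) * (μ * t / (1 + δ)) ^ (-(p + 1)) :=
          integral_one_add_rpow_neg_mul_rpow_le hp hμt hδ.le
      _ = _ := by rw [mul_div_right_comm, mul_rpow (by positivity) ht0.le]; ring
end

section
/- Let μ > 2, let δ > 0 be the unique positive root of μ log(1+δ) = 2δ, and let δ₁ ∈ (0, min{μ/2 - 1, δ}] (so that μ² - 4(1+δ₁)² > 0). Then for all r ∈ [0, δ₁]: √(μ² - 4(1+δ₁)²) · log(1+r) ≤ √(μ² log²(1+r) - 4r²) ≤ μ log(1+r); in particular μ² log²(1+r) - 4r² ≥ 0 on [0, δ₁]. -/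
/-!
Everything follows from the elementary bound `r ≤ (1 + r) log (1 + r)` (that is,
`1 - x⁻¹ ≤ log x` at `x = 1 + r`): on `[0, δ₁]` it gives `4 r² ≤ 4 (1 + δ₁)² log² (1 + r)`,
and `2 (1 + δ₁) ≤ μ` makes the right-hand side at most `μ² log² (1 + r)`.
-/

open Real

lemma self_le_one_add_mul_log_one_add {r : ℝ} (hr : -1 < r) : r ≤ (1 + r) * log (1 + r) := by
  have hpos : 0 < 1 + r := by linarith
  have h := one_sub_inv_le_log_of_pos hpos
  calc r = (1 + r) * (1 - (1 + r)⁻¹) := by field_simp; ring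
    _ ≤ (1 + r) * log (1 + r) := mul_le_mul_of_nonneg_left h hpos.le

lemma sq_le_one_add_sq_mul_log_one_add_sq {r a : ℝ} (hr : 0 ≤ r) (hra : r ≤ a) :
    r ^ 2 ≤ (1 + a) ^ 2 * log (1 + r) ^ 2 := by
  have hL : 0 ≤ log (1 + r) := log_nonneg (by linarith)
  have h : r ≤ (1 + a) * log (1 + r) :=
    (self_le_one_add_mul_log_one_add (by linarith)).trans (by gcongr)
  rw [← mul_pow]
  exact pow_le_pow_left₀ hr h 2

lemma sqrt_sub_mul_le_sqrt_mul_sq_sub {m c s L : ℝ} (hL : 0 ≤ L) (hs : s ≤ c * L ^ 2) :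
    √(m - c) * L ≤ √(m * L ^ 2 - s) := by
  calc √(m - c) * L = √((m - c) * L ^ 2) := by rw [sqrt_mul' _ (sq_nonneg L), sqrt_sq hL]
    _ ≤ √(m * L ^ 2 - s) := sqrt_le_sqrt (by rw [sub_mul]; linarith)

theorem stmt3_general (μ δ δ₁ : ℝ) (hδ₁le : δ₁ ≤ min (μ / 2 - 1) δ) :
    ∀ r ∈ Set.Icc (0:ℝ) δ₁,
      Real.sqrt (μ ^ 2 - 4 * (1 + δ₁) ^ 2) * Real.log (1 + r) ≤
        Real.sqrt (μ ^ 2 * Real.log (1 + r) ^ 2 - 4 * r ^ 2) ∧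
      Real.sqrt (μ ^ 2 * Real.log (1 + r) ^ 2 - 4 * r ^ 2) ≤ μ * Real.log (1 + r) ∧
      0 ≤ μ ^ 2 * Real.log (1 + r) ^ 2 - 4 * r ^ 2 := by
  rintro r ⟨hr0, hrδ₁⟩
  have hμδ₁ : 2 * (1 + δ₁) ≤ μ := by linarith [hδ₁le.trans (min_le_left _ _)]
  have hL : 0 ≤ log (1 + r) := log_nonneg (by linarith)
  have hr_sq : 4 * r ^ 2 ≤ 4 * (1 + δ₁) ^ 2 * log (1 + r) ^ 2 := by
    linarith [sq_le_one_add_sq_mul_log_one_add_sq hr0 hrδ₁]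
  have hμ_sq : 4 * (1 + δ₁) ^ 2 ≤ μ ^ 2 := by nlinarith
  have hnonneg : 0 ≤ μ ^ 2 * log (1 + r) ^ 2 - 4 * r ^ 2 := by
    nlinarith [sq_nonneg (log (1 + r))]
  refine ⟨sqrt_sub_mul_le_sqrt_mul_sq_sub hL hr_sq, ?_, hnonneg⟩
  rw [sqrt_le_left (by nlinarith)]
  nlinarith [sq_nonneg r]

/-- Lemma 3.1 (1): for `μ > 2` and `δ₁ ∈ (0, min (μ/2 - 1) δ]`, on `[0, δ₁]` one has
`√(μ² - 4(1+δ₁)²) log(1+r) ≤ √(μ² log²(1+r) - 4r²) ≤ μ log(1+r)`, and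
`μ² log²(1+r) - 4r² ≥ 0`. -/
theorem stmt3 (μ δ δ₁ : ℝ) (hμ : 2 < μ) (hδ : 0 < δ)
    (hroot : μ * Real.log (1 + δ) = 2 * δ)
    (hδ₁ : 0 < δ₁) (hδ₁le : δ₁ ≤ min (μ / 2 - 1) δ) :
    ∀ r ∈ Set.Icc (0:ℝ) δ₁,
      Real.sqrt (μ ^ 2 - 4 * (1 + δ₁) ^ 2) * Real.log (1 + r) ≤
        Real.sqrt (μ ^ 2 * Real.log (1 + r) ^ 2 - 4 * r ^ 2) ∧
      Real.sqrt (μ ^ 2 * Real.log (1 + r) ^ 2 - 4 * r ^ 2) ≤ μ * Real.log (1 + r) ∧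
      0 ≤ μ ^ 2 * Real.log (1 + r) ^ 2 - 4 * r ^ 2 :=
  stmt3_general μ δ δ₁ hδ₁le
end

section
/- Let n ≥ 1, μ ∈ (0, 2), u₀ ∈ L¹(ℝⁿ) and u₁ ∈ L^{1,1}(ℝⁿ). For ξ ∈ ℝⁿ \ {0} write r := |ξ| and b(r) := √(r² - (μ²/4) log²(1+r)), and define w(t,ξ) := (1+r)^{-μt/2} [ cos(b(r)t)·û₀(ξ) + (μ log(1+r)/(2b(r)))·sin(b(r)t)·û₀(ξ) + (1/b(r))·sin(b(r)t)·û₁(ξ) ] and χ(t,ξ) := P₁ (1+r)^{-μt/2} (1/b(r)) sin(γ t r), where γ := √(4-μ²)/2 and P₁ := ∫_{ℝⁿ} u₁(x) dx. Then there exist constants C > 0, α > 0 and t₀ > 0, with C depending only on n and μ, such that for all t ≥ t₀: ∫_{ℝⁿ} |w(t,ξ) - χ(t,ξ)|² dξ ≤ C (P₁² + ‖u₁‖²_{1,1} + ‖u₀‖₁²) t^{-n} + C P₁² e^{-αt}. -/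
open MeasureTheory

/-- The Fourier transform `f̂(ξ) = ∫ e^{-i x·ξ} f(x) dx`. -/
noncomputable def fourierTransformCLM' {n : ℕ} (f : EuclideanSpace ℝ (Fin n) → ℂ)
    (ξ : EuclideanSpace ℝ (Fin n)) : ℂ :=
  ∫ x, Complex.exp (-(Complex.I * ((inner ℝ x ξ : ℝ) : ℂ))) * f x

/-!
With `r = |ξ|` and `γ = √(4 - μ²)/2`, the bounds `2r/(r+2) ≤ log (1 + r) ≤ r` give
`γ r ≤ b(r) ≤ γ r + K r²` with `K = μ²/(8γ)`. Together with `|û₀| ≤ ‖u₀‖₁` and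
`|û₁(ξ) - P₁| ≤ r ‖u₁‖_{1,1}`, the splitting
`sin (b t) û₁ - sin (γ t r) P₁ = sin (b t) (û₁ - P₁) + (sin (b t) - sin (γ t r)) P₁`
followed by division by `b ≥ γ r` gives `|w - χ| ≤ (1 + r)^{-μt/2} (A + B t r)`, where `A` is a
combination of `‖u₀‖₁` and `‖u₁‖_{1,1}` and `B` is a multiple of `|P₁|`.
By Bernoulli's inequality `(1 + r)^{μt} ≥ (1 + λ r)^{n+3}` for `λ = μt/(n+3) ≥ 1`, so the square
of this bound is at most `(A + B t / λ)² (1 + λ r)^{-(n+1)}`, and the substitution `ξ ↦ λ ξ` turns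
its integral into `λ^{-n}` times the finite integral of `(1 + |ξ|)^{-(n+1)}`.
-/

open Real Set Module

lemma log_one_add_le_self {r : ℝ} (hr : -1 < r) : log (1 + r) ≤ r := by
  linarith [log_le_sub_one_of_pos (by linarith : 0 < 1 + r)]

lemma sq_sub_log_one_add_sq_le {r : ℝ} (hr : 0 ≤ r) : r ^ 2 - log (1 + r) ^ 2 ≤ r ^ 3 := by
  have hL₀ : 0 ≤ log (1 + r) := log_nonneg (by linarith)
  have hLr : log (1 + r) ≤ r := log_one_add_le_self (by linarith)
  have hlow : 2 * r ≤ log (1 + r) * (r + 2) := by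
    have := le_log_one_add_of_nonneg hr
    rwa [div_le_iff₀ (by linarith)] at this
  have hgap : 2 * (r - log (1 + r)) ≤ r ^ 2 := by nlinarith
  nlinarith [mul_le_mul hgap (by linarith : r + log (1 + r) ≤ 2 * r) (by linarith) (by positivity)]

section Frequency

variable {μ r : ℝ}

lemma mul_le_sqrt_sq_sub_log_sq (hμ : μ ^ 2 ≤ 4) (hr : 0 ≤ r) :
    √(4 - μ ^ 2) / 2 * r ≤ √(r ^ 2 - μ ^ 2 / 4 * log (1 + r) ^ 2) := by
  have hLr : log (1 + r) ≤ r := log_one_add_le_self (by linarith)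
  have hL₀ : 0 ≤ log (1 + r) := log_nonneg (by linarith)
  rw [show √(4 - μ ^ 2) / 2 * r = √((4 - μ ^ 2) / 4 * r ^ 2) by
    rw [sqrt_mul (by linarith), sqrt_div' _ (by norm_num), sqrt_sq hr,
      show (4 : ℝ) = 2 ^ 2 by norm_num, sqrt_sq (by norm_num)]]
  gcongr
  nlinarith [mul_le_mul hLr hLr hL₀ hr]

lemma sqrt_sq_sub_log_sq_le (hμ : μ ^ 2 < 4) (hr : 0 ≤ r) :
    √(r ^ 2 - μ ^ 2 / 4 * log (1 + r) ^ 2) ≤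
      √(4 - μ ^ 2) / 2 * r + μ ^ 2 / (4 * √(4 - μ ^ 2)) * r ^ 2 := by
  have hγ : 0 < √(4 - μ ^ 2) := sqrt_pos.mpr (by linarith)
  have hγsq : √(4 - μ ^ 2) ^ 2 = 4 - μ ^ 2 := sq_sqrt (by linarith)
  rw [sqrt_le_left (by positivity)]
  have hcross : 2 * (√(4 - μ ^ 2) / 2) * (μ ^ 2 / (4 * √(4 - μ ^ 2))) = μ ^ 2 / 4 := by
    field_simp
  nlinarith [sq_sub_log_one_add_sq_le hr, sq_nonneg (μ ^ 2 / (4 * √(4 - μ ^ 2)) * r ^ 2),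
    sq_nonneg μ, pow_nonneg hr 3]

end Frequency

section Fourier

variable {n : ℕ}

lemma norm_fourierTransformCLM'_le (f : EuclideanSpace ℝ (Fin n) → ℂ)
    (ξ : EuclideanSpace ℝ (Fin n)) : ‖fourierTransformCLM' f ξ‖ ≤ ∫ x, ‖f x‖ := by
  refine (norm_integral_le_integral_norm _).trans_eq ?_
  simp [Complex.norm_exp]

lemma norm_fourierTransformCLM'_sub_integral_le {f : EuclideanSpace ℝ (Fin n) → ℂ}
    (hf : Integrable f) (hfw : Integrable fun x ↦ (1 + ‖x‖) * ‖f x‖)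
    (ξ : EuclideanSpace ℝ (Fin n)) :
    ‖fourierTransformCLM' f ξ - ∫ x, f x‖ ≤ ‖ξ‖ * ∫ x, (1 + ‖x‖) * ‖f x‖ := by
  have hphase : ∀ x, ‖Complex.exp (-(Complex.I * ((inner ℝ x ξ : ℝ) : ℂ))) - 1‖ ≤
      ‖ξ‖ * (1 + ‖x‖) := fun x ↦ by
    have h := norm_exp_I_mul_ofReal_sub_one_le (x := -inner ℝ x ξ)
    rw [Complex.ofReal_neg, mul_neg, Real.norm_eq_abs, abs_neg] at h
    nlinarith [abs_real_inner_le_norm x ξ, norm_nonneg x, norm_nonneg ξ]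
  have hint : Integrable fun x ↦ Complex.exp (-(Complex.I * ((inner ℝ x ξ : ℝ) : ℂ))) * f x :=
    hf.bdd_mul (c := 1) (by fun_prop) (ae_of_all _ fun x ↦ by simp [Complex.norm_exp])
  rw [fourierTransformCLM', ← integral_sub hint hf, ← integral_const_mul]
  refine (norm_integral_le_integral_norm _).trans <|
    integral_mono_of_nonneg (ae_of_all _ fun _ ↦ norm_nonneg _) (hfw.const_mul _)
      (ae_of_all _ fun x ↦ ?_)
  calc ‖Complex.exp (-(Complex.I * ((inner ℝ x ξ : ℝ) : ℂ))) * f x - f x‖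
      = ‖Complex.exp (-(Complex.I * ((inner ℝ x ξ : ℝ) : ℂ))) - 1‖ * ‖f x‖ := by
        rw [← norm_mul, sub_one_mul]
    _ ≤ ‖ξ‖ * (1 + ‖x‖) * ‖f x‖ := by gcongr; exact hphase x
    _ = ‖ξ‖ * ((1 + ‖x‖) * ‖f x‖) := mul_assoc _ _ _

end Fourier

section Symbol

variable {μ b γ K L r t : ℝ}

lemma mul_div_two_mul_le_of_mul_le (hμ : 0 ≤ μ) (hγ : 0 < γ) (hL₀ : 0 ≤ L) (hLr : L ≤ r)
    (hb : γ * r ≤ b) : μ * L / (2 * b) ≤ μ / (2 * γ) := by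
  rcases (hL₀.trans hLr).eq_or_lt with rfl | hr
  · rw [le_antisymm hLr hL₀, mul_zero, zero_div]
    positivity
  have hb₀ : 0 < b := (mul_pos hγ hr).trans_le hb
  rw [div_le_div_iff₀ (by positivity) (by positivity)]
  nlinarith [mul_le_mul hLr hb (by positivity) hr.le]

lemma norm_div_mul_sin_sub_le {N : ℝ} {F P : ℂ} (hγ : 0 < γ) (hr : 0 ≤ r) (ht : 0 ≤ t)
    (hN : 0 ≤ N) (hb : γ * r ≤ b) (hbK : b ≤ γ * r + K * r ^ 2) (hF : ‖F - P‖ ≤ r * N) :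
    ‖((1 / b : ℝ) : ℂ) * ((sin (b * t) : ℝ) : ℂ) * F -
        P * ((1 / b : ℝ) : ℂ) * ((sin (γ * t * r) : ℝ) : ℂ)‖ ≤
      N / γ + K / γ * ‖P‖ * t * r := by
  rcases hr.eq_or_lt with rfl | hr₀
  · obtain rfl : b = 0 := by linarith
    simp only [div_zero, Complex.ofReal_zero, zero_mul, mul_zero, sub_zero, norm_zero]
    positivity
  have hb₀ : 0 < b := (mul_pos hγ hr₀).trans_le hb
  have hsin : |sin (b * t) - sin (γ * t * r)| ≤ t * (K * r ^ 2) := by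
    refine (abs_sin_sub_sin_le _ _).trans ?_
    rw [show b * t - γ * t * r = t * (b - γ * r) by ring, abs_mul, abs_of_nonneg ht,
      abs_of_nonneg (by linarith)]
    gcongr
    linarith
  calc ‖((1 / b : ℝ) : ℂ) * ((sin (b * t) : ℝ) : ℂ) * F -
          P * ((1 / b : ℝ) : ℂ) * ((sin (γ * t * r) : ℝ) : ℂ)‖
      = ‖((1 / b : ℝ) : ℂ) * (((sin (b * t) : ℝ) : ℂ) * (F - P) +
          ((sin (b * t) - sin (γ * t * r) : ℝ) : ℂ) * P)‖ := by
        push_cast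
        ring_nf
    _ = 1 / b * ‖((sin (b * t) : ℝ) : ℂ) * (F - P) +
          ((sin (b * t) - sin (γ * t * r) : ℝ) : ℂ) * P‖ := by
        rw [norm_mul, Complex.norm_real, Real.norm_of_nonneg (by positivity)]
    _ ≤ 1 / (γ * r) * (1 * (r * N) + t * (K * r ^ 2) * ‖P‖) := by
        gcongr
        refine (norm_add_le _ _).trans (add_le_add ?_ ?_) <;>
          rw [norm_mul, Complex.norm_real, Real.norm_eq_abs]
        · gcongr
          exact abs_sin_le_one _
        · gcongr
    _ = N / γ + K / γ * ‖P‖ * t * r := by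
        field_simp

lemma norm_wave_sub_le {ρ N₀ N₁ : ℝ} {F₀ F₁ P : ℂ} (hμ : 0 ≤ μ) (hγ : 0 < γ) (ht : 0 ≤ t)
    (hρ : 0 ≤ ρ) (hL₀ : 0 ≤ L) (hLr : L ≤ r) (hb : γ * r ≤ b) (hbK : b ≤ γ * r + K * r ^ 2)
    (hF₀ : ‖F₀‖ ≤ N₀) (hF₁ : ‖F₁ - P‖ ≤ r * N₁) (hN₁ : 0 ≤ N₁) :
    ‖(ρ : ℂ) * (((cos (b * t) : ℝ) : ℂ) * F₀ +
          ((μ * L / (2 * b) : ℝ) : ℂ) * ((sin (b * t) : ℝ) : ℂ) * F₀ +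
          ((1 / b : ℝ) : ℂ) * ((sin (b * t) : ℝ) : ℂ) * F₁) -
        P * (ρ : ℂ) * ((1 / b : ℝ) : ℂ) * ((sin (γ * t * r) : ℝ) : ℂ)‖ ≤
      ρ * ((1 + μ / (2 * γ)) * N₀ + N₁ / γ + K / γ * ‖P‖ * t * r) := by
  have hc₀ : 0 ≤ μ * L / (2 * b) := by
    have : 0 ≤ b := (mul_nonneg hγ.le (hL₀.trans hLr)).trans hb
    positivity
  have hc : μ * L / (2 * b) ≤ μ / (2 * γ) := mul_div_two_mul_le_of_mul_le hμ hγ hL₀ hLr hb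
  have hF₀' : ‖(((cos (b * t) : ℝ) : ℂ) + ((μ * L / (2 * b) : ℝ) : ℂ) *
      ((sin (b * t) : ℝ) : ℂ)) * F₀‖ ≤ (1 + μ / (2 * γ)) * N₀ := by
    rw [norm_mul]
    refine mul_le_mul ((norm_add_le _ _).trans (add_le_add ?_ ?_)) hF₀ (norm_nonneg _)
      (by positivity)
    · rw [Complex.norm_real, Real.norm_eq_abs]
      exact abs_cos_le_one _
    · rw [norm_mul, Complex.norm_real, Complex.norm_real, Real.norm_of_nonneg hc₀,
        Real.norm_eq_abs]
      exact (mul_le_of_le_one_right hc₀ (abs_sin_le_one _)).trans hc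
  calc _ = ‖(ρ : ℂ)‖ * ‖(((cos (b * t) : ℝ) : ℂ) + ((μ * L / (2 * b) : ℝ) : ℂ) *
          ((sin (b * t) : ℝ) : ℂ)) * F₀ + (((1 / b : ℝ) : ℂ) * ((sin (b * t) : ℝ) : ℂ) * F₁ -
          P * ((1 / b : ℝ) : ℂ) * ((sin (γ * t * r) : ℝ) : ℂ))‖ := by
        rw [← norm_mul]
        ring_nf
    _ ≤ ρ * ((1 + μ / (2 * γ)) * N₀ + (N₁ / γ + K / γ * ‖P‖ * t * r)) := by
        rw [Complex.norm_real, Real.norm_of_nonneg hρ]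
        gcongr
        exact (norm_add_le _ _).trans (add_le_add hF₀'
          (norm_div_mul_sin_sub_le hγ (hL₀.trans hLr) ht hN₁ hb hbK hF₁))
    _ = ρ * ((1 + μ / (2 * γ)) * N₀ + N₁ / γ + K / γ * ‖P‖ * t * r) := by ring

end Symbol

lemma sq_one_add_rpow_mul_le {m s A B r : ℝ} (hm : 0 < m) (hs : m ≤ s) (hA : 0 ≤ A)
    (hB : 0 ≤ B) (hr : 0 ≤ r) :
    ((1 + r) ^ (-s / 2) * (A + B * r)) ^ 2 ≤
      (A + m * B / s) ^ 2 * (1 + s / m * r) ^ (2 - m) := by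
  have hs₀ : 0 < s := hm.trans_le hs
  set X := 1 + s / m * r with hXdef
  have hX : 0 < X := by positivity
  have hdecay : ((1 + r) ^ (-s / 2)) ^ 2 ≤ X ^ (-m) := by
    rw [← rpow_natCast, ← rpow_mul (by linarith),
      show -s / 2 * ((2 : ℕ) : ℝ) = s / m * (-m) by push_cast; field_simp, rpow_mul (by linarith)]
    exact rpow_le_rpow_of_nonpos hX
      (one_add_mul_self_le_rpow_one_add (by linarith) ((one_le_div hm).2 hs)) (by linarith)
  have hlin : A + B * r ≤ (A + m * B / s) * X := by
    have hBr : m * B / s * (s / m * r) = B * r := by field_simp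
    have : 0 ≤ A * (s / m * r) + m * B / s := by positivity
    rw [hXdef]
    nlinarith
  calc ((1 + r) ^ (-s / 2) * (A + B * r)) ^ 2
      = ((1 + r) ^ (-s / 2)) ^ 2 * (A + B * r) ^ 2 := mul_pow _ _ _
    _ ≤ X ^ (-m) * ((A + m * B / s) * X) ^ 2 := by gcongr
    _ = (A + m * B / s) ^ 2 * X ^ (2 - m) := by
        rw [rpow_sub hX, rpow_neg hX.le, rpow_two]
        ring

section Scaling

variable {E : Type*} [NormedAddCommGroup E] [NormedSpace ℝ E] [MeasurableSpace E] [BorelSpace E]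
  [FiniteDimensional ℝ E] (ν : Measure E) [ν.IsAddHaarMeasure]

lemma integral_one_add_norm_rpow_pos {r : ℝ} (hr : (finrank ℝ E : ℝ) < r) :
    0 < ∫ x, (1 + ‖x‖) ^ (-r) ∂ν := by
  rw [integral_pos_iff_support_of_nonneg (fun _ ↦ by positivity) (integrable_one_add_norm hr)]
  suffices (Function.support fun x : E ↦ (1 + ‖x‖) ^ (-r)) = univ by
    simp [this, NeZero.ne ν]
  exact eq_univ_of_forall fun x ↦ (by positivity : (0 : ℝ) < (1 + ‖x‖) ^ (-r)).ne'

lemma integral_norm_sq_le_of_norm_le {F : Type*} [NormedAddCommGroup F] {f : E → F}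
    {s A B : ℝ} (hs : (finrank ℝ E : ℝ) + 3 ≤ s) (hA : 0 ≤ A) (hB : 0 ≤ B)
    (hf : ∀ x, ‖f x‖ ≤ (1 + ‖x‖) ^ (-s / 2) * (A + B * ‖x‖)) :
    ∫ x, ‖f x‖ ^ 2 ∂ν ≤
      (A + (finrank ℝ E + 3) * B / s) ^ 2 * ((finrank ℝ E + 3) / s) ^ finrank ℝ E *
        ∫ x, (1 + ‖x‖) ^ (-(finrank ℝ E + 1 : ℝ)) ∂ν := by
  set d := finrank ℝ E
  have hm : (0 : ℝ) < d + 3 := by positivity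
  have hs₀ : 0 < s := hm.trans_le hs
  have hint : Integrable (fun x : E ↦ (1 + ‖x‖) ^ (-(d + 1 : ℝ))) ν :=
    integrable_one_add_norm (by linarith)
  calc ∫ x, ‖f x‖ ^ 2 ∂ν
      ≤ ∫ x, (A + (d + 3) * B / s) ^ 2 * (1 + ‖(s / (d + 3)) • x‖) ^ (-(d + 1 : ℝ)) ∂ν := by
        refine integral_mono_of_nonneg (ae_of_all _ fun _ ↦ sq_nonneg _)
          ((hint.comp_smul (by positivity)).const_mul _) (ae_of_all _ fun x ↦ ?_)
        dsimp only
        rw [norm_smul, Real.norm_of_nonneg (by positivity), show -(d + 1 : ℝ) = 2 - (d + 3) by ring]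
        exact (pow_le_pow_left₀ (norm_nonneg _) (hf x) 2).trans
          (sq_one_add_rpow_mul_le hm hs hA hB (norm_nonneg x))
    _ = _ := by
        rw [integral_const_mul, Measure.integral_comp_smul ν (fun x ↦ (1 + ‖x‖) ^ (-(d + 1 : ℝ))),
          smul_eq_mul, ← inv_pow, inv_div, abs_of_nonneg (by positivity), mul_assoc]

lemma integral_norm_sq_le_rpow_neg_of_norm_le {F : Type*} [NormedAddCommGroup F] {f : E → F}
    {μ t A B : ℝ} (hμ : 0 < μ) (ht : (finrank ℝ E + 3) / μ ≤ t) (hA : 0 ≤ A) (hB : 0 ≤ B)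
    (hf : ∀ x, ‖f x‖ ≤ (1 + ‖x‖) ^ (-(μ * t) / 2) * (A + B * t * ‖x‖)) :
    ∫ x, ‖f x‖ ^ 2 ∂ν ≤
      (A + (finrank ℝ E + 3) * B / μ) ^ 2 * ((finrank ℝ E + 3) / μ) ^ finrank ℝ E *
        (∫ x, (1 + ‖x‖) ^ (-(finrank ℝ E + 1 : ℝ)) ∂ν) * t ^ (-(finrank ℝ E : ℝ)) := by
  set d := finrank ℝ E
  have ht₀ : 0 < t := (by positivity : 0 < (d + 3) / μ).trans_le ht
  have hs : (d : ℝ) + 3 ≤ μ * t := by rwa [div_le_iff₀ hμ, mul_comm] at ht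
  calc ∫ x, ‖f x‖ ^ 2 ∂ν
      ≤ (A + (d + 3) * (B * t) / (μ * t)) ^ 2 * ((d + 3) / (μ * t)) ^ d *
          ∫ x, (1 + ‖x‖) ^ (-(d + 1 : ℝ)) ∂ν :=
        integral_norm_sq_le_of_norm_le ν hs hA (by positivity) hf
    _ = _ := by
        rw [show (d + 3) * (B * t) / (μ * t) = (d + 3) * B / μ by field_simp, ← div_div,
          div_pow, rpow_neg ht₀.le, rpow_natCast]
        ring

end Scaling

lemma mul_add_mul_add_mul_sq_le (a b c x y z : ℝ) :
    (a * x + b * y + c * z) ^ 2 ≤ (a ^ 2 + b ^ 2 + c ^ 2) * (x ^ 2 + y ^ 2 + z ^ 2) := by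
  nlinarith [sq_nonneg (a * y - b * x), sq_nonneg (a * z - c * x), sq_nonneg (b * z - c * y)]

theorem stmt10_general (n : ℕ) (μ : ℝ) (hμ : μ ∈ Set.Ioo (0:ℝ) 2)
    (u₀ u₁ : EuclideanSpace ℝ (Fin n) → ℂ)
    (hu₁ : Integrable u₁)
    (hu₁w : Integrable (fun x : EuclideanSpace ℝ (Fin n) => (1 + ‖x‖) * ‖u₁ x‖)) :
    let b : ℝ → ℝ := fun r => Real.sqrt (r ^ 2 - μ ^ 2 / 4 * Real.log (1 + r) ^ 2)
    let γ : ℝ := Real.sqrt (4 - μ ^ 2) / 2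
    let P₁ : ℂ := ∫ x, u₁ x
    let w : ℝ → EuclideanSpace ℝ (Fin n) → ℂ := fun t ξ =>
      (((1 + ‖ξ‖) ^ (-(μ * t) / 2) : ℝ) : ℂ) *
        (((Real.cos (b ‖ξ‖ * t) : ℝ) : ℂ) * fourierTransformCLM' u₀ ξ +
         ((μ * Real.log (1 + ‖ξ‖) / (2 * b ‖ξ‖) : ℝ) : ℂ) *
           ((Real.sin (b ‖ξ‖ * t) : ℝ) : ℂ) * fourierTransformCLM' u₀ ξ +
         ((1 / b ‖ξ‖ : ℝ) : ℂ) * ((Real.sin (b ‖ξ‖ * t) : ℝ) : ℂ) *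
           fourierTransformCLM' u₁ ξ)
    let χ : ℝ → EuclideanSpace ℝ (Fin n) → ℂ := fun t ξ =>
      P₁ * (((1 + ‖ξ‖) ^ (-(μ * t) / 2) : ℝ) : ℂ) * ((1 / b ‖ξ‖ : ℝ) : ℂ) *
        ((Real.sin (γ * t * ‖ξ‖) : ℝ) : ℂ)
    ∃ C α t₀ : ℝ, 0 < C ∧ 0 < α ∧ 0 < t₀ ∧ ∀ t : ℝ, t₀ ≤ t →
      (∫ ξ : EuclideanSpace ℝ (Fin n), ‖w t ξ - χ t ξ‖ ^ 2) ≤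
        C * (‖P₁‖ ^ 2 + (∫ x, (1 + ‖x‖) * ‖u₁ x‖) ^ 2 + (∫ x, ‖u₀ x‖) ^ 2) *
            t ^ (-(n : ℝ)) +
          C * ‖P₁‖ ^ 2 * Real.exp (-α * t) := by
  intro b γ P₁ w χ
  obtain ⟨hμ₀, hμ₂⟩ := hμ
  have hμsq : μ ^ 2 < 4 := by nlinarith
  have hγ : 0 < γ := half_pos (sqrt_pos.mpr (by linarith))
  set N₀ := ∫ x, ‖u₀ x‖
  set N₁ := ∫ x, (1 + ‖x‖) * ‖u₁ x‖
  set K := μ ^ 2 / (4 * √(4 - μ ^ 2))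
  set k₀ := 1 + μ / (2 * γ)
  set m : ℝ := n + 3
  set I := ∫ ξ : EuclideanSpace ℝ (Fin n), (1 + ‖ξ‖) ^ (-(n + 1 : ℝ))
  have hI : 0 < I := integral_one_add_norm_rpow_pos volume (by simp)
  have hpt : ∀ t, 0 ≤ t → ∀ ξ, ‖w t ξ - χ t ξ‖ ≤
      (1 + ‖ξ‖) ^ (-(μ * t) / 2) * (k₀ * N₀ + N₁ / γ + K / γ * ‖P₁‖ * t * ‖ξ‖) :=
    fun t ht ξ ↦ norm_wave_sub_le hμ₀.le hγ ht (by positivity) (log_nonneg (by simp))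
      (log_one_add_le_self (by linarith [norm_nonneg ξ]))
      (mul_le_sqrt_sq_sub_log_sq hμsq.le (norm_nonneg ξ))
      (sqrt_sq_sub_log_sq_le hμsq (norm_nonneg ξ)) (norm_fourierTransformCLM'_le u₀ ξ)
      (norm_fourierTransformCLM'_sub_integral_le hu₁ hu₁w ξ) (integral_nonneg fun _ ↦ by positivity)
  refine ⟨((m * (K / γ) / μ) ^ 2 + (1 / γ) ^ 2 + k₀ ^ 2) * (m / μ) ^ n * I, 1, m / μ,
    by positivity, one_pos, by positivity, fun t ht ↦ ?_⟩
  have ht₀ : 0 < t := (by positivity : 0 < m / μ).trans_le ht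
  calc ∫ ξ, ‖w t ξ - χ t ξ‖ ^ 2
      ≤ (k₀ * N₀ + N₁ / γ + m * (K / γ * ‖P₁‖) / μ) ^ 2 * (m / μ) ^ n * I * t ^ (-(n : ℝ)) := by
        simpa only [finrank_euclideanSpace_fin] using
          integral_norm_sq_le_rpow_neg_of_norm_le volume hμ₀ (by simpa using ht) (by positivity)
            (by positivity) (hpt t ht₀.le)
    _ ≤ ((m * (K / γ) / μ) ^ 2 + (1 / γ) ^ 2 + k₀ ^ 2) * (‖P₁‖ ^ 2 + N₁ ^ 2 + N₀ ^ 2) *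
          (m / μ) ^ n * I * t ^ (-(n : ℝ)) := by
        gcongr
        refine (mul_add_mul_add_mul_sq_le (m * (K / γ) / μ) (1 / γ) k₀ ‖P₁‖ N₁ N₀).trans_eq' ?_
        ring
    _ = ((m * (K / γ) / μ) ^ 2 + (1 / γ) ^ 2 + k₀ ^ 2) * (m / μ) ^ n * I *
          (‖P₁‖ ^ 2 + N₁ ^ 2 + N₀ ^ 2) * t ^ (-(n : ℝ)) := by ring
    _ ≤ _ := le_add_of_nonneg_right (by positivity)

/-- Lemma 2.3: for `μ ∈ (0,2)`, `u₀ ∈ L¹`, `u₁ ∈ L^{1,1}`,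
`∫ |w(t,ξ) - χ(t,ξ)|² dξ ≤ C(P₁² + ‖u₁‖²_{1,1} + ‖u₀‖₁²) t^{-n} + C P₁² e^{-αt}`. -/
theorem stmt10 (n : ℕ) (hn : 1 ≤ n) (μ : ℝ) (hμ : μ ∈ Set.Ioo (0:ℝ) 2)
    (u₀ u₁ : EuclideanSpace ℝ (Fin n) → ℂ)
    (hu₀ : Integrable u₀) (hu₁ : Integrable u₁)
    (hu₁w : Integrable (fun x : EuclideanSpace ℝ (Fin n) => (1 + ‖x‖) * ‖u₁ x‖)) :
    let b : ℝ → ℝ := fun r => Real.sqrt (r ^ 2 - μ ^ 2 / 4 * Real.log (1 + r) ^ 2)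
    let γ : ℝ := Real.sqrt (4 - μ ^ 2) / 2
    let P₁ : ℂ := ∫ x, u₁ x
    let w : ℝ → EuclideanSpace ℝ (Fin n) → ℂ := fun t ξ =>
      (((1 + ‖ξ‖) ^ (-(μ * t) / 2) : ℝ) : ℂ) *
        (((Real.cos (b ‖ξ‖ * t) : ℝ) : ℂ) * fourierTransformCLM' u₀ ξ +
         ((μ * Real.log (1 + ‖ξ‖) / (2 * b ‖ξ‖) : ℝ) : ℂ) *
           ((Real.sin (b ‖ξ‖ * t) : ℝ) : ℂ) * fourierTransformCLM' u₀ ξ +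
         ((1 / b ‖ξ‖ : ℝ) : ℂ) * ((Real.sin (b ‖ξ‖ * t) : ℝ) : ℂ) *
           fourierTransformCLM' u₁ ξ)
    let χ : ℝ → EuclideanSpace ℝ (Fin n) → ℂ := fun t ξ =>
      P₁ * (((1 + ‖ξ‖) ^ (-(μ * t) / 2) : ℝ) : ℂ) * ((1 / b ‖ξ‖ : ℝ) : ℂ) *
        ((Real.sin (γ * t * ‖ξ‖) : ℝ) : ℂ)
    ∃ C α t₀ : ℝ, 0 < C ∧ 0 < α ∧ 0 < t₀ ∧ ∀ t : ℝ, t₀ ≤ t →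
      (∫ ξ : EuclideanSpace ℝ (Fin n), ‖w t ξ - χ t ξ‖ ^ 2) ≤
        C * (‖P₁‖ ^ 2 + (∫ x, (1 + ‖x‖) * ‖u₁ x‖) ^ 2 + (∫ x, ‖u₀ x‖) ^ 2) *
            t ^ (-(n : ℝ)) +
          C * ‖P₁‖ ^ 2 * Real.exp (-α * t) :=
  stmt10_general n μ hμ u₀ u₁ hu₁ hu₁w
end

section
/- Let n ≥ 1, μ > 2, let δ > 0 be the unique positive root of μ log(1+δ) = 2δ, and let δ₁ ∈ (0, min{μ/2 - 1, δ}] with δ₁ < δ. For ξ with δ₁ ≤ |ξ| < δ write r := |ξ|, h(r) := μ² log²(1+r) - 4r², λ±(r) := (-μ log(1+r) ± √(h(r)))/2, and define ν(t,ξ) := (e^{λ₊(r)t} - e^{λ₋(r)t})/√(h(r)). Then there exist constants C > 0, α > 0 and t₀ > 0 such that for all t ≥ t₀: ∫_{δ₁ ≤ |ξ| < δ} |ν(t,ξ)|² dξ ≤ C e^{-αt}. -/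
/-!
Write `a = μ log (1 + r)`. Since `log (1 + r) / r` is strictly decreasing and `μ log (1 + δ) = 2 δ`,
`2 r < a` on the annulus, so `h(r) = a² - 4 r² > 0`. The larger root satisfies
`λ₊ = -2 r² / (a + √h) ≤ -r² / a ≤ -δ₁² / (μ log (1 + δ)) =: -c`, and because `λ₊ - λ₋ = √h`, the mean
value bound for `exp` gives `0 ≤ ν(t, ξ) ≤ t e^{λ₊ t} ≤ t e^{-c t}`. Hence `ν² ≤ const · e^{-c t}`
uniformly on the (bounded) annulus, and integrating gives the claim with `α = c`.
-/

open MeasureTheory Real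

lemma strictAntiOn_log_one_add_div_self : StrictAntiOn (fun x => log (1 + x) / x) (Set.Ioi 0) := by
  intro a (ha : 0 < a) b (hb : 0 < b) hab
  have := strictConcaveOn_log_Ioi.secant_strict_mono (a := 1) (x := 1 + a) (y := 1 + b)
    (Set.mem_Ioi.2 one_pos) (Set.mem_Ioi.2 (by linarith)) (Set.mem_Ioi.2 (by linarith))
    (by linarith) (by linarith) (by linarith)
  simpa using this

lemma two_mul_lt_mul_log_one_add {μ δ r : ℝ} (hμ : 0 < μ) (hroot : μ * log (1 + δ) = 2 * δ)
    (hr : 0 < r) (hrδ : r < δ) : 2 * r < μ * log (1 + r) := by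
  have hslope := strictAntiOn_log_one_add_div_self (Set.mem_Ioi.2 hr)
    (Set.mem_Ioi.2 (hr.trans hrδ)) hrδ
  have hδ : 0 < δ := hr.trans hrδ
  calc 2 * r = μ * r * (log (1 + δ) / δ) := by field_simp; linarith
    _ < μ * r * (log (1 + r) / r) := by gcongr
    _ = μ * log (1 + r) := by field_simp

lemma neg_add_sqrt_sq_sub_div_two_le {a r : ℝ} (ha : 0 < a) (hr : 2 * r ^ 2 ≤ a ^ 2) :
    (-a + √(a ^ 2 - 4 * r ^ 2)) / 2 ≤ -(r ^ 2 / a) := by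
  have hsqrt : √(a ^ 2 - 4 * r ^ 2) ≤ a - 2 * r ^ 2 / a := by
    rw [Real.sqrt_le_left]
    · have : 0 ≤ (2 * r ^ 2 / a) ^ 2 := sq_nonneg _
      have : a * (2 * r ^ 2 / a) = 2 * r ^ 2 := by field_simp
      nlinarith
    · rw [sub_nonneg, div_le_iff₀ ha]; nlinarith
  have : 2 * r ^ 2 / a = 2 * (r ^ 2 / a) := by ring
  linarith

lemma exp_sub_exp_le_mul_exp (x y : ℝ) : exp x - exp y ≤ (x - y) * exp x := by
  have h := one_sub_le_exp_neg (x - y)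
  have hy : exp y = exp (-(x - y)) * exp x := by rw [← exp_add]; ring_nf
  nlinarith [exp_pos x]

lemma abs_exp_mul_sub_exp_mul_div_sub_le {x y t : ℝ} (hyx : y < x) (ht : 0 ≤ t) :
    |(exp (x * t) - exp (y * t)) / (x - y)| ≤ t * exp (x * t) := by
  have hxy : 0 < x - y := sub_pos.2 hyx
  have hmono : exp (y * t) ≤ exp (x * t) := exp_le_exp.2 (by gcongr)
  rw [abs_of_nonneg (div_nonneg (sub_nonneg.2 hmono) hxy.le), div_le_iff₀ hxy]
  calc exp (x * t) - exp (y * t) ≤ (x * t - y * t) * exp (x * t) := exp_sub_exp_le_mul_exp _ _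
    _ = t * exp (x * t) * (x - y) := by ring

lemma sq_mul_exp_neg_mul_le {c t : ℝ} (hc : 0 < c) (ht : 0 ≤ t) :
    (t * exp (-c * t)) ^ 2 ≤ (2 * exp (-1) / c) ^ 2 * exp (-c * t) := by
  have hbound : t * exp (-(c * t / 2)) ≤ 2 * exp (-1) / c := by
    rw [le_div_iff₀ hc]
    nlinarith [mul_exp_neg_le_exp_neg_one (c * t / 2)]
  have hsplit : exp (-c * t) = exp (-(c * t / 2)) ^ 2 := by rw [sq, ← exp_add]; ring_nf
  calc (t * exp (-c * t)) ^ 2 = (t * exp (-(c * t / 2))) ^ 2 * exp (-c * t) := by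
        rw [hsplit]; ring
    _ ≤ (2 * exp (-1) / c) ^ 2 * exp (-c * t) := by gcongr

lemma neg_mul_log_add_sqrt_div_two_le {μ δ δ₁ r : ℝ} (hμ : 0 < μ)
    (hroot : μ * log (1 + δ) = 2 * δ) (hδ₁ : 0 < δ₁) (hr₁ : δ₁ ≤ r) (hr : r < δ) :
    (-(μ * log (1 + r)) + √(μ ^ 2 * log (1 + r) ^ 2 - 4 * r ^ 2)) / 2 ≤
      -(δ₁ ^ 2 / (μ * log (1 + δ))) := by
  have hr₀ : 0 < r := hδ₁.trans_le hr₁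
  have h2r := two_mul_lt_mul_log_one_add hμ hroot hr₀ hr
  have hlog : 0 < log (1 + r) := log_pos (by linarith)
  calc (-(μ * log (1 + r)) + √(μ ^ 2 * log (1 + r) ^ 2 - 4 * r ^ 2)) / 2
      = (-(μ * log (1 + r)) + √((μ * log (1 + r)) ^ 2 - 4 * r ^ 2)) / 2 := by rw [mul_pow]
    _ ≤ -(r ^ 2 / (μ * log (1 + r))) :=
        neg_add_sqrt_sq_sub_div_two_le (by positivity) (by nlinarith)
    _ ≤ -(δ₁ ^ 2 / (μ * log (1 + δ))) := by
        gcongr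

theorem stmt17_general (n : ℕ) (μ δ δ₁ : ℝ) (hμ : 2 < μ) (hδ : 0 < δ)
    (hroot : μ * Real.log (1 + δ) = 2 * δ)
    (hδ₁ : 0 < δ₁) :
    let h : ℝ → ℝ := fun r => μ ^ 2 * Real.log (1 + r) ^ 2 - 4 * r ^ 2
    let lp : ℝ → ℝ := fun r => (-(μ * Real.log (1 + r)) + Real.sqrt (h r)) / 2
    let lm : ℝ → ℝ := fun r => (-(μ * Real.log (1 + r)) - Real.sqrt (h r)) / 2
    let ν : ℝ → EuclideanSpace ℝ (Fin n) → ℝ := fun t ξ =>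
      (Real.exp (lp ‖ξ‖ * t) - Real.exp (lm ‖ξ‖ * t)) / Real.sqrt (h ‖ξ‖)
    ∃ C α t₀ : ℝ, 0 < C ∧ 0 < α ∧ 0 < t₀ ∧ ∀ t : ℝ, t₀ ≤ t →
      (∫ ξ in {ξ : EuclideanSpace ℝ (Fin n) | δ₁ ≤ ‖ξ‖ ∧ ‖ξ‖ < δ}, |ν t ξ| ^ 2) ≤
        C * Real.exp (-α * t) := by
  intro h lp lm ν
  set s := {ξ : EuclideanSpace ℝ (Fin n) | δ₁ ≤ ‖ξ‖ ∧ ‖ξ‖ < δ}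
  set c := δ₁ ^ 2 / (μ * log (1 + δ))
  set B := (2 * exp (-1) / c) ^ 2
  have hμ₀ : 0 < μ := by linarith
  have hc : 0 < c := by have := log_pos (by linarith : 1 < 1 + δ); positivity
  have hs : volume s < ⊤ :=
    (measure_mono fun ξ hξ => mem_ball_zero_iff.2 hξ.2).trans_lt measure_ball_lt_top
  refine ⟨B * (volume.real s + 1), c, 1, by positivity, hc, one_pos, fun t ht => ?_⟩
  have hpointwise : ∀ ξ ∈ s, ‖|ν t ξ| ^ 2‖ ≤ B * exp (-c * t) := by
    rintro ξ ⟨hr₁, hr⟩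
    have hr₀ : 0 < ‖ξ‖ := hδ₁.trans_le hr₁
    have hh : 0 < h ‖ξ‖ := by
      have := two_mul_lt_mul_log_one_add hμ₀ hroot hr₀ hr
      simp only [h]; nlinarith
    have hlp : lp ‖ξ‖ ≤ -c := neg_mul_log_add_sqrt_div_two_le hμ₀ hroot hδ₁ hr₁ hr
    have hlm : lm ‖ξ‖ < lp ‖ξ‖ := by have := sqrt_pos.2 hh; simp only [lp, lm]; linarith
    have hν : ν t ξ = (exp (lp ‖ξ‖ * t) - exp (lm ‖ξ‖ * t)) / (lp ‖ξ‖ - lm ‖ξ‖) := by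
      simp only [ν, lp, lm]; ring_nf
    calc ‖|ν t ξ| ^ 2‖ = |ν t ξ| ^ 2 := by rw [norm_pow, norm_abs_eq_norm, Real.norm_eq_abs]
      _ ≤ (t * exp (lp ‖ξ‖ * t)) ^ 2 := by
          rw [hν]
          gcongr
          exact abs_exp_mul_sub_exp_mul_div_sub_le hlm (by linarith)
      _ ≤ (t * exp (-c * t)) ^ 2 := by gcongr
      _ ≤ B * exp (-c * t) := sq_mul_exp_neg_mul_le hc (by linarith)
  calc (∫ ξ in s, |ν t ξ| ^ 2) ≤ ‖∫ ξ in s, |ν t ξ| ^ 2‖ := le_norm_self _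
    _ ≤ B * exp (-c * t) * volume.real s := norm_setIntegral_le_of_norm_le_const hs hpointwise
    _ ≤ B * (volume.real s + 1) * exp (-c * t) := by
        rw [mul_right_comm B]; gcongr; linarith

/-- Estimate (3.23) (middle frequency, `μ > 2`): the profile
`ν(t,ξ) = (e^{λ₊t} - e^{λ₋t})/√(h(r))` (with `r = |ξ|`) satisfies
`∫_{δ₁ ≤ |ξ| < δ} |ν(t,ξ)|² dξ ≤ C e^{-αt}` for large `t`. -/
theorem stmt17 (n : ℕ) (hn : 1 ≤ n) (μ δ δ₁ : ℝ) (hμ : 2 < μ) (hδ : 0 < δ)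
    (hroot : μ * Real.log (1 + δ) = 2 * δ)
    (hδ₁ : 0 < δ₁) (hδ₁le : δ₁ ≤ min (μ / 2 - 1) δ) (hδ₁lt : δ₁ < δ) :
    let h : ℝ → ℝ := fun r => μ ^ 2 * Real.log (1 + r) ^ 2 - 4 * r ^ 2
    let lp : ℝ → ℝ := fun r => (-(μ * Real.log (1 + r)) + Real.sqrt (h r)) / 2
    let lm : ℝ → ℝ := fun r => (-(μ * Real.log (1 + r)) - Real.sqrt (h r)) / 2
    let ν : ℝ → EuclideanSpace ℝ (Fin n) → ℝ := fun t ξ =>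
      (Real.exp (lp ‖ξ‖ * t) - Real.exp (lm ‖ξ‖ * t)) / Real.sqrt (h ‖ξ‖)
    ∃ C α t₀ : ℝ, 0 < C ∧ 0 < α ∧ 0 < t₀ ∧ ∀ t : ℝ, t₀ ≤ t →
      (∫ ξ in {ξ : EuclideanSpace ℝ (Fin n) | δ₁ ≤ ‖ξ‖ ∧ ‖ξ‖ < δ}, |ν t ξ| ^ 2) ≤
        C * Real.exp (-α * t) :=
  stmt17_general n μ δ δ₁ hμ hδ hroot hδ₁
end

section
/- Let n ≥ 1 and define f(r) := r² - log²(1+r) for r > 0 (so f(r) > 0 for r > 0). Then there exists η₀ > 0 such that for every η ∈ (0, η₀] there exist constants c > 0, C > 0 and t₀ > 0 with the property that for all t ≥ t₀ the integral I_n(t) := ∫₀^η (1+r)^{-2t} r^{n-1} (sin²(t√(f(r)))/f(r)) dr satisfies c t^{2-n} ≤ I_n(t) ≤ C t^{2-n}. -/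
/-! For `0 < r ≤ 2` one has `r / 2 ≤ log (1 + r) ≤ r`, so `(1 + r) ^ (-2t)` lies between
`e^(-2tr)` and `e^(-tr)`, while `sin² (t √f) / f` lies between `(2t/π)²` (Jordan's inequality,
applicable as long as `t r ≤ 1`) and `t²`. Hence the integrand is at most `t² r^(n-1) e^(-tr)`,
whose integral over `(0, ∞)` is `(n-1)! t^(1-n)`, and on `(0, 1/t)` it is at least
`e^(-2) (2t/π)² r^(n-1)`, whose integral there is `e^(-2) (2/π)² t^(1-n) / n`. -/

open MeasureTheory

section

open Real Set Nat

noncomputable def logDampedDiscr (r : ℝ) : ℝ := r ^ 2 - log (1 + r) ^ 2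

/-- The integrand of `I_n(t)` with `m = n - 1`, so that no truncated subtraction occurs. -/
noncomputable def logDampedIntegrand (m : ℕ) (t r : ℝ) : ℝ :=
  (1 + r) ^ (-(2 * t)) * r ^ m * (sin (t * √(logDampedDiscr r)) ^ 2 / logDampedDiscr r)

lemma half_le_log_one_add {r : ℝ} (hr0 : 0 ≤ r) (hr2 : r ≤ 2) : r / 2 ≤ log (1 + r) := by
  refine le_trans ?_ (le_log_one_add_of_nonneg hr0)
  rw [div_le_div_iff₀ two_pos (by linarith)]
  nlinarith

lemma logDampedDiscr_pos {r : ℝ} (hr : 0 < r) : 0 < logDampedDiscr r := by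
  have hlog : log (1 + r) < r := by
    linarith [log_lt_sub_one_of_pos (by linarith : (0 : ℝ) < 1 + r) (by linarith)]
  have := pow_lt_pow_left₀ hlog (log_nonneg (by linarith)) two_ne_zero
  unfold logDampedDiscr
  linarith

lemma logDampedDiscr_nonneg {r : ℝ} (hr : 0 ≤ r) : 0 ≤ logDampedDiscr r := by
  rcases hr.eq_or_lt with rfl | hr
  · simp [logDampedDiscr]
  · exact (logDampedDiscr_pos hr).le

lemma logDampedDiscr_le_sq (r : ℝ) : logDampedDiscr r ≤ r ^ 2 :=
  sub_le_self _ (sq_nonneg _)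

lemma one_add_rpow_neg_le_exp_neg {r t : ℝ} (hr0 : 0 ≤ r) (hr2 : r ≤ 2) (ht : 0 ≤ t) :
    (1 + r) ^ (-(2 * t)) ≤ exp (-(t * r)) := by
  rw [rpow_def_of_pos (by linarith)]
  gcongr
  nlinarith [half_le_log_one_add hr0 hr2]

lemma exp_neg_le_one_add_rpow_neg {r s : ℝ} (hr : -1 < r) (hs : 0 ≤ s) :
    exp (-(s * r)) ≤ (1 + r) ^ (-s) := by
  rw [rpow_def_of_pos (by linarith)]
  gcongr
  nlinarith [log_le_sub_one_of_pos (by linarith : (0 : ℝ) < 1 + r)]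

lemma sin_sq_mul_sqrt_div_le (t y : ℝ) : sin (t * √y) ^ 2 / y ≤ t ^ 2 := by
  rcases le_or_gt y 0 with hy | hy
  · simpa [sqrt_eq_zero'.2 hy] using sq_nonneg t
  rw [div_le_iff₀ hy]
  calc sin (t * √y) ^ 2 ≤ (t * √y) ^ 2 := sin_sq_le_sq
    _ = t ^ 2 * y := by rw [mul_pow, sq_sqrt hy.le]

lemma sq_le_sin_sq_mul_sqrt_div {t y : ℝ} (ht : 0 ≤ t) (hy : 0 < y) (h : t * √y ≤ π / 2) :
    (2 / π * t) ^ 2 ≤ sin (t * √y) ^ 2 / y := by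
  rw [le_div_iff₀ hy]
  calc (2 / π * t) ^ 2 * y = (2 / π * (t * √y)) ^ 2 := by
        rw [mul_pow, mul_pow, mul_pow, sq_sqrt hy.le]; ring
    _ ≤ sin (t * √y) ^ 2 := by
        gcongr
        exact mul_le_sin (by positivity) h

lemma logDampedIntegrand_nonneg (m : ℕ) (t : ℝ) {r : ℝ} (hr : 0 ≤ r) :
    0 ≤ logDampedIntegrand m t r := by
  have := logDampedDiscr_nonneg hr
  unfold logDampedIntegrand
  positivity

lemma logDampedIntegrand_le (m : ℕ) {t r : ℝ} (ht : 0 ≤ t) (hr0 : 0 ≤ r) (hr2 : r ≤ 2) :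
    logDampedIntegrand m t r ≤ t ^ 2 * (r ^ m * exp (-(t * r))) := by
  calc logDampedIntegrand m t r ≤ exp (-(t * r)) * r ^ m * t ^ 2 := by
        unfold logDampedIntegrand
        have := logDampedDiscr_nonneg hr0
        gcongr
        · exact one_add_rpow_neg_le_exp_neg hr0 hr2 ht
        · exact sin_sq_mul_sqrt_div_le t _
    _ = t ^ 2 * (r ^ m * exp (-(t * r))) := by ring

lemma le_logDampedIntegrand (m : ℕ) {t r : ℝ} (ht : 0 ≤ t) (hr : 0 < r) (htr : t * r ≤ 1) :
    exp (-2) * r ^ m * (2 / π * t) ^ 2 ≤ logDampedIntegrand m t r := by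
  have hdiscr := logDampedDiscr_pos hr
  have hphase : t * √(logDampedDiscr r) ≤ π / 2 := by
    have : √(logDampedDiscr r) ≤ r :=
      (sqrt_le_sqrt (logDampedDiscr_le_sq r)).trans_eq (sqrt_sq hr.le)
    nlinarith [pi_gt_three]
  unfold logDampedIntegrand
  gcongr ?_ * _ * ?_
  · calc exp (-2) ≤ exp (-(2 * t * r)) := by gcongr; linarith
      _ ≤ (1 + r) ^ (-(2 * t)) := exp_neg_le_one_add_rpow_neg (by linarith) (by linarith)
  · exact sq_le_sin_sq_mul_sqrt_div ht hdiscr hphase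

lemma integrableOn_pow_mul_exp_neg_mul_Ioi (m : ℕ) {b : ℝ} (hb : 0 < b) :
    IntegrableOn (fun r : ℝ => r ^ m * exp (-(b * r))) (Ioi 0) := by
  have hm : (-1 : ℝ) < m := by linarith [m.cast_nonneg (α := ℝ)]
  refine (integrableOn_rpow_mul_exp_neg_mul_rpow hm one_pos hb).congr_fun (fun r _ => ?_)
    measurableSet_Ioi
  simp [rpow_natCast]

lemma integral_pow_mul_exp_neg_mul_Ioi (m : ℕ) {b : ℝ} (hb : 0 < b) :
    ∫ r in Ioi 0, r ^ m * exp (-(b * r)) = m ! / b ^ (m + 1) := by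
  have h := integral_rpow_mul_exp_neg_mul_Ioi (a := m + 1) (by positivity) hb
  rw [add_sub_cancel_right, Gamma_nat_eq_factorial] at h
  simp only [rpow_natCast] at h
  rw [h, ← rpow_natCast, Nat.cast_succ, one_div, inv_rpow hb.le]
  exact inv_mul_eq_div _ _

lemma integral_Ioo_zero_pow (m : ℕ) {a : ℝ} (ha : 0 ≤ a) :
    ∫ r in Ioo 0 a, r ^ m = a ^ (m + 1) / (m + 1) := by
  rw [← integral_Ioc_eq_integral_Ioo, ← intervalIntegral.integral_of_le ha, integral_pow]
  simp

lemma measurable_logDampedIntegrand (m : ℕ) (t : ℝ) : Measurable (logDampedIntegrand m t) := by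
  unfold logDampedIntegrand logDampedDiscr
  fun_prop

lemma integrableOn_logDampedIntegrand (m : ℕ) {t η : ℝ} (ht : 0 < t) (hη : η ≤ 2) :
    IntegrableOn (logDampedIntegrand m t) (Ioo 0 η) := by
  have hdom : IntegrableOn (fun r => t ^ 2 * (r ^ m * exp (-(t * r)))) (Ioi 0) :=
    (integrableOn_pow_mul_exp_neg_mul_Ioi m ht).const_mul _
  refine (hdom.mono_set Ioo_subset_Ioi_self).mono'
    (measurable_logDampedIntegrand m t).aestronglyMeasurable ?_
  refine (ae_restrict_iff' measurableSet_Ioo).2 (Filter.Eventually.of_forall fun r hr => ?_)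
  rw [Real.norm_of_nonneg (logDampedIntegrand_nonneg m t hr.1.le)]
  exact logDampedIntegrand_le m ht.le hr.1.le (hr.2.le.trans hη)

lemma setIntegral_logDampedIntegrand_le (m : ℕ) {t η : ℝ} (ht : 0 < t) (hη : η ≤ 2) :
    ∫ r in Ioo 0 η, logDampedIntegrand m t r ≤ m ! * (t ^ 2 / t ^ (m + 1)) := by
  have hdom : IntegrableOn (fun r => t ^ 2 * (r ^ m * exp (-(t * r)))) (Ioi 0) :=
    (integrableOn_pow_mul_exp_neg_mul_Ioi m ht).const_mul _
  calc ∫ r in Ioo 0 η, logDampedIntegrand m t r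
      ≤ ∫ r in Ioo 0 η, t ^ 2 * (r ^ m * exp (-(t * r))) :=
        setIntegral_mono_on (integrableOn_logDampedIntegrand m ht hη)
          (hdom.mono_set Ioo_subset_Ioi_self) measurableSet_Ioo
          fun r hr => logDampedIntegrand_le m ht.le hr.1.le (hr.2.le.trans hη)
    _ ≤ ∫ r in Ioi 0, t ^ 2 * (r ^ m * exp (-(t * r))) :=
        setIntegral_mono_set hdom
          ((ae_restrict_iff' measurableSet_Ioi).2
            (Filter.Eventually.of_forall fun r (hr : 0 < r) => by positivity))
          Ioo_subset_Ioi_self.eventuallyLE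
    _ = m ! * (t ^ 2 / t ^ (m + 1)) := by
        rw [integral_const_mul, integral_pow_mul_exp_neg_mul_Ioi m ht]
        ring

lemma le_setIntegral_logDampedIntegrand (m : ℕ) {t η : ℝ} (ht : 0 < t) (hη : η ≤ 2)
    (htη : t⁻¹ ≤ η) :
    exp (-2) * (2 / π) ^ 2 / (m + 1) * (t ^ 2 / t ^ (m + 1)) ≤
      ∫ r in Ioo 0 η, logDampedIntegrand m t r := by
  have hint := integrableOn_logDampedIntegrand m ht hη
  calc exp (-2) * (2 / π) ^ 2 / (m + 1) * (t ^ 2 / t ^ (m + 1))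
      = ∫ r in Ioo 0 t⁻¹, exp (-2) * r ^ m * (2 / π * t) ^ 2 := by
        rw [integral_mul_const, integral_const_mul, integral_Ioo_zero_pow m (by positivity)]
        field_simp
        rw [← mul_pow, mul_one_div_cancel ht.ne', one_pow]
    _ ≤ ∫ r in Ioo 0 t⁻¹, logDampedIntegrand m t r := by
        refine setIntegral_mono_on ?_ (hint.mono_set (Ioo_subset_Ioo_right htη))
          measurableSet_Ioo fun r hr => le_logDampedIntegrand m ht.le hr.1 ?_
        · exact (by fun_prop : Continuous fun r : ℝ => exp (-2) * r ^ m * (2 / π * t) ^ 2)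
            |>.integrableOn_Icc.mono_set Ioo_subset_Icc_self
        · rw [← le_div_iff₀' ht, one_div]; exact hr.2.le
    _ ≤ ∫ r in Ioo 0 η, logDampedIntegrand m t r :=
        setIntegral_mono_set hint
          ((ae_restrict_iff' measurableSet_Ioo).2 (Filter.Eventually.of_forall fun r hr =>
            logDampedIntegrand_nonneg m t hr.1.le))
          (Ioo_subset_Ioo_right htη).eventuallyLE

end

/-- Section 6 estimates (critical case `μ = 2`): with `f(r) = r² - log²(1+r)`, there
is `η₀ > 0` such that for every `η ∈ (0, η₀]`,
`I_n(t) = ∫₀^η (1+r)^{-2t} r^{n-1} sin²(t√(f(r)))/f(r) dr ∼ t^{2-n}` as `t → ∞`. -/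
theorem stmt19 (n : ℕ) (hn : 1 ≤ n) :
    let f : ℝ → ℝ := fun r => r ^ 2 - Real.log (1 + r) ^ 2
    (∀ r : ℝ, 0 < r → 0 < f r) ∧
    ∃ η₀ : ℝ, 0 < η₀ ∧ ∀ η ∈ Set.Ioc (0:ℝ) η₀, ∃ c C t₀ : ℝ,
      0 < c ∧ 0 < C ∧ 0 < t₀ ∧ ∀ t : ℝ, t₀ ≤ t →
        c * t ^ ((2 : ℝ) - n) ≤
          (∫ r in Set.Ioo (0:ℝ) η,
            (1 + r) ^ (-(2 * t)) * r ^ (n - 1) * (Real.sin (t * Real.sqrt (f r)) ^ 2 / f r)) ∧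
        (∫ r in Set.Ioo (0:ℝ) η,
            (1 + r) ^ (-(2 * t)) * r ^ (n - 1) * (Real.sin (t * Real.sqrt (f r)) ^ 2 / f r)) ≤
          C * t ^ ((2 : ℝ) - n) := by
  intro f
  obtain ⟨m, rfl⟩ := Nat.exists_eq_add_of_le' hn
  refine ⟨fun r hr => logDampedDiscr_pos hr, 2, two_pos, fun η ⟨hη0, hη2⟩ => ?_⟩
  refine ⟨Real.exp (-2) * (2 / Real.pi) ^ 2 / (m + 1), m.factorial, η⁻¹,
    by positivity, by positivity, by positivity, fun t ht => ?_⟩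
  have ht0 : 0 < t := (inv_pos.2 hη0).trans_le ht
  have hpow : t ^ ((2 : ℝ) - (m + 1 : ℕ)) = t ^ 2 / t ^ (m + 1) := by
    rw [Real.rpow_sub ht0, Real.rpow_natCast, Real.rpow_two]
  rw [hpow, Nat.add_sub_cancel]
  exact ⟨le_setIntegral_logDampedIntegrand m ht0 hη2 (inv_le_of_inv_le₀ hη0 ht),
    setIntegral_logDampedIntegrand_le m ht0 hη2⟩
end
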